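/- arXiv:1203.2393 — 2 statements merged into one kernel-verified Lean document; each statement's English description precedes it below -/
import Mathlib

section
/- For the PU on–off sampling model under uniform sampling with Γ_c = e^{−λ_f T_c/u} and sensing-error probabilities P_f, P_m ∈ [0,1], for any indices 1 ≤ i and j ≥ 1 with i + j ≤ N, the joint probability that observed samples i and i+j are both 1 satisfies R̃_{i,i+j} := ∑_{z̃ ∈ {0,1}^N : z̃_i = 1 and z̃_{i+j} = 1} P̃(z̃) = (u·Γ_c^{j} + u²(1−Γ_c^{j}))·(1−P_m−P_f)² + 2u·P_f·(1−P_m−P_f) + P_f². -/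
open Finset

/-- Transition probabilities of the PU on-off process:
`transProb u lf t x y = Pr_{xy}(t)` where `false` = idle, `true` = active. -/
noncomputable def transProb (u lf t : ℝ) : Bool → Bool → ℝ
  | false, false => 1 - u + u * Real.exp (-(lf * t) / u)
  | false, true  => 1 - (1 - u + u * Real.exp (-(lf * t) / u))
  | true,  true  => u + (1 - u) * Real.exp (-(lf * t) / u)
  | true,  false => 1 - (u + (1 - u) * Real.exp (-(lf * t) / u))

/-- Probability of a binary sample sequence `z` of length `n + 1`
with inter-sample times `T 1, …, T n`. -/
noncomputable def seqProb (u lf : ℝ) {n : ℕ} (T : ℕ → ℝ) (z : Fin (n + 1) → Bool) : ℝ :=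
  (if z 0 then u else 1 - u) *
    ∏ k : Fin n, transProb u lf (T (k.val + 1)) (z k.castSucc) (z k.succ)

/-- Sensing-error kernel `q(z̃ | z)`: `q(1|0) = P_f`, `q(0|0) = 1 - P_f`,
`q(0|1) = P_m`, `q(1|1) = 1 - P_m`. -/
noncomputable def senseErr (Pf Pm : ℝ) : Bool → Bool → ℝ
  | true,  false => Pf
  | false, false => 1 - Pf
  | false, true  => Pm
  | true,  true  => 1 - Pm

/-- Distribution of the observed (sensed) sample sequence `z̃`:
`P̃(z̃) = ∑_z P(z) ∏_n q(z̃_n | z_n)`. -/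
noncomputable def obsProb (u lf Pf Pm : ℝ) {n : ℕ} (T : ℕ → ℝ) (zt : Fin (n + 1) → Bool) : ℝ :=
  ∑ z : Fin (n + 1) → Bool, seqProb u lf T z * ∏ i, senseErr Pf Pm (zt i) (z i)

/-- m-step transition with Γ^m. -/
noncomputable def stepPow (u G : ℝ) (m : ℕ) : Bool → Bool → ℝ
  | false, false => 1 - u + u * G ^ m
  | false, true  => 1 - (1 - u + u * G ^ m)
  | true,  true  => u + (1 - u) * G ^ m
  | true,  false => 1 - (u + (1 - u) * G ^ m)

lemma transProb_rowsum (u lf t : ℝ) (x : Bool) :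
    ∑ y : Bool, transProb u lf t x y = 1 := by
  cases x <;> simp [transProb, Fintype.sum_bool] <;> ring

lemma transProb_stat (u lf t : ℝ) (y : Bool) :
    ∑ x : Bool, (if x then u else 1 - u) * transProb u lf t x y
      = (if y then u else 1 - u) := by
  cases y <;> simp [transProb, Fintype.sum_bool] <;> ring

lemma ck (u lf Tc : ℝ) (m : ℕ) (x b : Bool) :
    ∑ y : Bool, stepPow u (Real.exp (-(lf*Tc)/u)) m x y * transProb u lf Tc y b
      = stepPow u (Real.exp (-(lf*Tc)/u)) (m+1) x b := by
  cases x <;> cases b <;>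
    simp [stepPow, transProb, Fintype.sum_bool, pow_succ] <;> ring

lemma seqProb_snoc (u lf : ℝ) (T : ℕ → ℝ) (m : ℕ) (z : Fin (m+1) → Bool) (b : Bool) :
    seqProb u lf T (Fin.snoc z b) =
      seqProb u lf T z * transProb u lf (T (m+1)) (z (Fin.last m)) b := by
  have h0 : (Fin.snoc z b : Fin (m+2) → Bool) 0 = z 0 := by
    have h : (0 : Fin (m+2)) = Fin.castSucc 0 := rfl
    rw [h, Fin.snoc_castSucc]
  simp only [seqProb, Fin.prod_univ_castSucc, Fin.succ_castSucc, Fin.snoc_castSucc,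
    Fin.snoc_last, Fin.succ_last, Fin.coe_castSucc, h0, Fin.val_last]
  ring

lemma seqProb_cons (u lf Tc : ℝ) (m : ℕ) (x : Bool) (z : Fin (m+1) → Bool) :
    seqProb u lf (fun _ => Tc) (Fin.cons x z) =
      ((if x then u else 1 - u) * transProb u lf Tc x (z 0)) *
        ∏ k : Fin m, transProb u lf Tc (z k.castSucc) (z k.succ) := by
  simp only [seqProb, Fin.prod_univ_succ, Fin.cons_zero, Fin.cons_succ, Fin.succ_castSucc]
  have h : ∀ k : Fin m, (Fin.cons x z : Fin (m+2) → Bool) k.succ.castSucc = z k.castSucc := by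
    intro k
    rw [← Fin.succ_castSucc, Fin.cons_succ]
  simp only [h]
  have h00 : (Fin.cons x z : Fin (m+2) → Bool) ((0 : Fin (m+1)).castSucc) = x := by
    have : ((0 : Fin (m+1)).castSucc) = (0 : Fin (m+2)) := rfl
    rw [this, Fin.cons_zero]
  rw [h00]
  ring

lemma tail_collapse (u lf : ℝ) (T : ℕ → ℝ) (m : ℕ) (F : (Fin (m+1) → Bool) → ℝ) :
    ∑ z : Fin (m+1+1) → Bool, seqProb u lf T z * F (fun k => z k.castSucc)
      = ∑ z : Fin (m+1) → Bool, seqProb u lf T z * F z := by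
  rw [← Equiv.sum_comp (Fin.snocEquiv (fun _ => Bool))
    (fun z => seqProb u lf T z * F (fun k => z k.castSucc))]
  rw [Fintype.sum_prod_type, Finset.sum_comm]
  refine Finset.sum_congr rfl fun z _ => ?_
  have he : ∀ b : Bool, ((Fin.snocEquiv (fun _ => Bool)) (b, z) : Fin (m+2) → Bool)
      = Fin.snoc z b := by
    intro b; funext k; rfl
  simp only [he, seqProb_snoc, Fin.snoc_castSucc]
  have h1 : ∀ b : Bool,
      seqProb u lf T z * transProb u lf (T (m+1)) (z (Fin.last m)) b * F z
        = (seqProb u lf T z * F z) * transProb u lf (T (m+1)) (z (Fin.last m)) b :=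
    fun b => by ring
  simp only [h1]
  rw [← Finset.mul_sum, transProb_rowsum, mul_one]

lemma head_collapse (u lf Tc : ℝ) (m : ℕ) (F : (Fin (m+1) → Bool) → ℝ) :
    ∑ z : Fin (m+1+1) → Bool, seqProb u lf (fun _ => Tc) z * F (fun k => z k.succ)
      = ∑ z : Fin (m+1) → Bool, seqProb u lf (fun _ => Tc) z * F z := by
  rw [← Equiv.sum_comp (Fin.consEquiv (fun _ => Bool))
    (fun z => seqProb u lf (fun _ => Tc) z * F (fun k => z k.succ))]
  rw [Fintype.sum_prod_type, Finset.sum_comm]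
  refine Finset.sum_congr rfl fun z _ => ?_
  have he : ∀ x : Bool, ((Fin.consEquiv (fun _ => Bool)) (x, z) : Fin (m+2) → Bool)
      = Fin.cons x z := by
    intro x; funext k; rfl
  simp only [he, seqProb_cons, Fin.cons_succ]
  have h1 : ∀ x : Bool,
      (if x = true then u else 1 - u) * transProb u lf Tc x (z 0) *
          (∏ k : Fin m, transProb u lf Tc (z k.castSucc) (z k.succ)) * F z
        = ((if x = true then u else 1 - u) * transProb u lf Tc x (z 0)) *
          ((∏ k : Fin m, transProb u lf Tc (z k.castSucc) (z k.succ)) * F z) :=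
    fun x => by ring
  simp only [h1]
  rw [← Finset.sum_mul, transProb_stat, seqProb, mul_assoc]

lemma core (u lf Tc : ℝ) (g : Bool → ℝ) : ∀ (m : ℕ) (h : Bool → ℝ),
    ∑ z : Fin (m+1) → Bool, seqProb u lf (fun _ => Tc) z * (g (z 0) * h (z (Fin.last m)))
      = ∑ x : Bool, ∑ y : Bool,
          (if x then u else 1 - u) * g x * (stepPow u (Real.exp (-(lf*Tc)/u)) m x y * h y)
  | 0, h => by
    rw [← Equiv.sum_comp (Equiv.funUnique (Fin 1) Bool).symm
      (fun z => seqProb u lf (fun _ => Tc) z * (g (z 0) * h (z (Fin.last 0))))]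
    simp [seqProb, stepPow, Fintype.sum_bool, Equiv.funUnique, Fin.last]
    ring
  | (m+1), h => by
    rw [← Equiv.sum_comp (Fin.snocEquiv (fun _ => Bool))
      (fun z => seqProb u lf (fun _ => Tc) z * (g (z 0) * h (z (Fin.last (m+1)))))]
    rw [Fintype.sum_prod_type, Finset.sum_comm]
    have he : ∀ (b : Bool) (z : Fin (m+1) → Bool),
        ((Fin.snocEquiv (fun _ => Bool)) (b, z) : Fin (m+2) → Bool) = Fin.snoc z b := by
      intro b z; funext k; rfl
    have h0 : ∀ (b : Bool) (z : Fin (m+1) → Bool),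
        (Fin.snoc z b : Fin (m+2) → Bool) 0 = z 0 := by
      intro b z
      have hh : (0 : Fin (m+2)) = Fin.castSucc 0 := rfl
      rw [hh, Fin.snoc_castSucc]
    simp only [he, seqProb_snoc, h0, Fin.snoc_last]
    have h1 : ∀ (z : Fin (m+1) → Bool) (b : Bool),
        seqProb u lf (fun _ => Tc) z * transProb u lf Tc (z (Fin.last m)) b * (g (z 0) * h b)
          = seqProb u lf (fun _ => Tc) z *
            (g (z 0) * (transProb u lf Tc (z (Fin.last m)) b * h b)) := fun z b => by ring
    simp only [h1]
    rw [show (∑ z : Fin (m+1) → Bool, ∑ b : Bool, seqProb u lf (fun _ => Tc) z *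
        (g (z 0) * (transProb u lf Tc (z (Fin.last m)) b * h b)))
      = ∑ z : Fin (m+1) → Bool, seqProb u lf (fun _ => Tc) z *
        (g (z 0) * ((fun y => ∑ b : Bool, transProb u lf Tc y b * h b) (z (Fin.last m))))
      from Finset.sum_congr rfl fun z _ => by rw [← Finset.mul_sum, ← Finset.mul_sum]]
    rw [core u lf Tc g m (fun y => ∑ b : Bool, transProb u lf Tc y b * h b)]
    refine Finset.sum_congr rfl fun x _ => ?_
    have h2 : ∀ y : Bool,
        (if x then u else 1 - u) * g x * (stepPow u (Real.exp (-(lf*Tc)/u)) m x y *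
            ∑ b : Bool, transProb u lf Tc y b * h b)
          = ∑ b : Bool, (if x then u else 1 - u) * g x *
              (stepPow u (Real.exp (-(lf*Tc)/u)) m x y * (transProb u lf Tc y b * h b)) := by
      intro y
      rw [Finset.mul_sum, Finset.mul_sum]
    simp only [h2]
    rw [Finset.sum_comm]
    refine Finset.sum_congr rfl fun b _ => ?_
    have h3 : ∀ y : Bool, (if x then u else 1 - u) * g x *
          (stepPow u (Real.exp (-(lf*Tc)/u)) m x y * (transProb u lf Tc y b * h b))
        = ((if x then u else 1 - u) * g x * h b) *
          (stepPow u (Real.exp (-(lf*Tc)/u)) m x y * transProb u lf Tc y b) := fun y => by ring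
    simp only [h3]
    rw [← Finset.mul_sum, ck]
    ring

noncomputable def Scorr (u lf Tc : ℝ) (g h : Bool → ℝ) (n a b : ℕ)
    (ha : a < n+1) (hb : b < n+1) : ℝ :=
  ∑ z : Fin (n+1) → Bool, seqProb u lf (fun _ => Tc) z * (g (z ⟨a, ha⟩) * h (z ⟨b, hb⟩))

lemma strip_tail (u lf Tc : ℝ) (g h : Bool → ℝ) :
    ∀ (n a b : ℕ) (hab : a ≤ b) (hb : b ≤ n),
    Scorr u lf Tc g h n a b (by omega) (by omega)
      = Scorr u lf Tc g h b a b (by omega) (by omega)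
  | 0, a, b, hab, hb => by
    have h1 : b = 0 := by omega
    subst h1; rfl
  | (n+1), a, b, hab, hb => by
    rcases Nat.lt_or_ge b (n+1) with h1 | h1
    · have hb' : b ≤ n := by omega
      have step : Scorr u lf Tc g h (n+1) a b (by omega) (by omega)
          = Scorr u lf Tc g h n a b (by omega) (by omega) := by
        unfold Scorr
        rw [← tail_collapse u lf (fun _ => Tc) n
          (fun z => g (z ⟨a, by omega⟩) * h (z ⟨b, by omega⟩))]
        rfl
      exact step.trans (strip_tail u lf Tc g h n a b hab hb')
    · have h2 : b = n+1 := by omega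
      subst h2; rfl

lemma strip_head (u lf Tc : ℝ) (g h : Bool → ℝ) :
    ∀ (a d n : ℕ) (hn : n = a + d),
    Scorr u lf Tc g h n a n (by omega) (by omega)
      = Scorr u lf Tc g h d 0 d (by omega) (by omega)
  | 0, d, n, hn => by
    have h1 : n = d := by omega
    subst h1; rfl
  | (a+1), d, n, hn => by
    obtain ⟨m, rfl⟩ : ∃ m, n = m+1 := ⟨a+d, by omega⟩
    have hm : m = a + d := by omega
    have step : Scorr u lf Tc g h (m+1) (a+1) (m+1) (by omega) (by omega)
        = Scorr u lf Tc g h m a m (by omega) (by omega) := by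
      unfold Scorr
      rw [← head_collapse u lf Tc m
        (fun z => g (z ⟨a, by omega⟩) * h (z ⟨m, by omega⟩))]
      rfl
    exact step.trans (strip_head u lf Tc g h a d m hm)

lemma obs_factor (Pf Pm : ℝ) {N : ℕ} (z : Fin N → Bool) (a b : Fin N) (hab : a ≠ b) :
    ∑ zt : Fin N → Bool, (∏ i, senseErr Pf Pm (zt i) (z i)) *
        ((if zt a then (1:ℝ) else 0) * (if zt b then 1 else 0))
      = senseErr Pf Pm true (z a) * senseErr Pf Pm true (z b) := by
  have h2 : ∀ zt : Fin N → Bool,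
      (∏ i, senseErr Pf Pm (zt i) (z i)) *
          ((if zt a then (1:ℝ) else 0) * (if zt b then 1 else 0))
        = ∏ k, (senseErr Pf Pm (zt k) (z k) *
            ((if k = a then (if zt k then (1:ℝ) else 0) else 1) *
             (if k = b then (if zt k then (1:ℝ) else 0) else 1))) := by
    intro zt
    rw [Finset.prod_mul_distrib, Finset.prod_mul_distrib,
      Finset.prod_ite_eq' Finset.univ a (fun k => if zt k then (1:ℝ) else 0),
      Finset.prod_ite_eq' Finset.univ b (fun k => if zt k then (1:ℝ) else 0)]
    simp
  simp only [h2]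
  rw [← Fintype.prod_sum (fun (k : Fin N) (c : Bool) => senseErr Pf Pm c (z k) *
      ((if k = a then if c = true then (1:ℝ) else 0 else 1) *
       if k = b then if c = true then (1:ℝ) else 0 else 1))]
  have h3 : ∀ k, (∑ c : Bool, senseErr Pf Pm c (z k) *
          ((if k = a then (if c then (1:ℝ) else 0) else 1) *
           (if k = b then (if c then (1:ℝ) else 0) else 1)))
      = (if k = a then senseErr Pf Pm true (z k) else 1) *
        (if k = b then senseErr Pf Pm true (z k) else 1) := by
    intro k
    by_cases ha : k = a <;> by_cases hb : k = b
    · exact absurd (ha.symm.trans hb) hab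
    · simp [ha, hb, Fintype.sum_bool, hab]
    · simp [ha, hb, Fintype.sum_bool, (Ne.symm hab)]
    · simp only [ha, hb, if_neg, mul_one, if_false]
      cases hz : z k <;> simp [senseErr, Fintype.sum_bool, hz] <;> ring
  simp only [h3]
  rw [Finset.prod_mul_distrib,
    Finset.prod_ite_eq' Finset.univ a (fun k => senseErr Pf Pm true (z k)),
    Finset.prod_ite_eq' Finset.univ b (fun k => senseErr Pf Pm true (z k))]
  simp

/-- under uniform sampling with `Γ_c = e^{-λ_f T_c/u}` and sensing
errors, the joint probability that the (1-based) observed samples `i` and `i+j`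
are both 1 is `(uΓ_c^j + u²(1-Γ_c^j))(1-P_m-P_f)² + 2uP_f(1-P_m-P_f) + P_f²`.
Here the number of samples is `N = n + 1`. -/
theorem observed_sample_correlation (u lf Tc Pf Pm : ℝ)
    (hu : 0 < u) (hu1 : u < 1) (hlf : 0 < lf) (hTc : 0 < Tc)
    (hPf : Pf ∈ Set.Icc (0 : ℝ) 1) (hPm : Pm ∈ Set.Icc (0 : ℝ) 1) (n : ℕ)
    (i j : ℕ) (hi : 1 ≤ i) (hj : 1 ≤ j) (hij : i + j ≤ n + 1) :
    (∑ zt : Fin (n + 1) → Bool,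
        if zt ⟨i - 1, by omega⟩ = true ∧ zt ⟨i + j - 1, by omega⟩ = true then
          obsProb u lf Pf Pm (fun _ => Tc) zt else 0)
      = (u * (Real.exp (-(lf * Tc) / u)) ^ j
          + u ^ 2 * (1 - (Real.exp (-(lf * Tc) / u)) ^ j)) * (1 - Pm - Pf) ^ 2
        + 2 * u * Pf * (1 - Pm - Pf) + Pf ^ 2 := by
  classical
  have hab : (⟨i - 1, by omega⟩ : Fin (n+1)) ≠ ⟨i + j - 1, by omega⟩ := by
    intro hc
    have hv : i - 1 = i + j - 1 := congrArg Fin.val hc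
    omega
  have h1 : ∀ zt : Fin (n+1) → Bool,
      (if zt ⟨i - 1, by omega⟩ = true ∧ zt ⟨i + j - 1, by omega⟩ = true then
          obsProb u lf Pf Pm (fun _ => Tc) zt else 0)
      = ∑ z : Fin (n+1) → Bool, seqProb u lf (fun _ => Tc) z *
          ((∏ k, senseErr Pf Pm (zt k) (z k)) *
            ((if zt ⟨i - 1, by omega⟩ = true then (1:ℝ) else 0) *
             (if zt ⟨i + j - 1, by omega⟩ = true then (1:ℝ) else 0))) := by
    intro zt
    by_cases hA : zt ⟨i - 1, by omega⟩ = true <;>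
      by_cases hB : zt ⟨i + j - 1, by omega⟩ = true <;>
      simp [obsProb, hA, hB]
  calc (∑ zt : Fin (n + 1) → Bool,
        if zt ⟨i - 1, by omega⟩ = true ∧ zt ⟨i + j - 1, by omega⟩ = true then
          obsProb u lf Pf Pm (fun _ => Tc) zt else 0)
      = ∑ zt : Fin (n+1) → Bool, ∑ z : Fin (n+1) → Bool,
          seqProb u lf (fun _ => Tc) z *
          ((∏ k, senseErr Pf Pm (zt k) (z k)) *
            ((if zt ⟨i - 1, by omega⟩ = true then (1:ℝ) else 0) *
             (if zt ⟨i + j - 1, by omega⟩ = true then (1:ℝ) else 0))) :=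
        Finset.sum_congr rfl fun zt _ => h1 zt
    _ = ∑ z : Fin (n+1) → Bool, ∑ zt : Fin (n+1) → Bool,
          seqProb u lf (fun _ => Tc) z *
          ((∏ k, senseErr Pf Pm (zt k) (z k)) *
            ((if zt ⟨i - 1, by omega⟩ = true then (1:ℝ) else 0) *
             (if zt ⟨i + j - 1, by omega⟩ = true then (1:ℝ) else 0))) := Finset.sum_comm
    _ = ∑ z : Fin (n+1) → Bool, seqProb u lf (fun _ => Tc) z *
          (senseErr Pf Pm true (z ⟨i - 1, by omega⟩) *
           senseErr Pf Pm true (z ⟨i + j - 1, by omega⟩)) := by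
        refine Finset.sum_congr rfl fun z _ => ?_
        rw [← Finset.mul_sum, obs_factor Pf Pm z _ _ hab]
    _ = Scorr u lf Tc (fun c => senseErr Pf Pm true c) (fun c => senseErr Pf Pm true c)
          n (i-1) (i+j-1) (by omega) (by omega) := rfl
    _ = Scorr u lf Tc (fun c => senseErr Pf Pm true c) (fun c => senseErr Pf Pm true c)
          (i+j-1) (i-1) (i+j-1) (by omega) (by omega) :=
        strip_tail u lf Tc _ _ n (i-1) (i+j-1) (by omega) (by omega)
    _ = Scorr u lf Tc (fun c => senseErr Pf Pm true c) (fun c => senseErr Pf Pm true c)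
          j 0 j (by omega) (by omega) :=
        strip_head u lf Tc _ _ (i-1) j (i+j-1) (by omega)
    _ = ∑ x : Bool, ∑ y : Bool,
          (if x then u else 1 - u) * senseErr Pf Pm true x *
            (stepPow u (Real.exp (-(lf*Tc)/u)) j x y * senseErr Pf Pm true y) := by
        rw [← core u lf Tc (fun c => senseErr Pf Pm true c) j (fun c => senseErr Pf Pm true c)]
        rfl
    _ = (u * (Real.exp (-(lf * Tc) / u)) ^ j
          + u ^ 2 * (1 - (Real.exp (-(lf * Tc) / u)) ^ j)) * (1 - Pm - Pf) ^ 2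
        + 2 * u * Pf * (1 - Pm - Pf) + Pf ^ 2 := by
        simp [Fintype.sum_bool, stepPow, senseErr]
        ring
end

section
/- For the PU on–off sampling model under uniform sampling, fix λ_f > 0 and T_c > 0, regard the likelihood L(z; u) = u^{z_1}(1−u)^{1−z_1}·∏_{k=1}^{N−1} Pr_{z_k z_{k+1}}(T_c; u) as a function of u ∈ (0,1) (with Γ_c(u) = e^{−λ_f T_c/u}), and define the Fisher information I_m(u,N) = ∑_{z ∈ {0,1}^N} (∂/∂u of log L(z; u))² · L(z; u). Then for N ≥ 2, writing Γ = Γ_c(u), I_m(u,N) = (M_1 + M_2 + M_3 + M_4 + M_5) / ( u³(1−u)·(1−Γ)·(Γ + u − Γu)·(Γu − u + 1) ), where M_1 = Γ²·λ_f T_c·(N−1)·(1−u)·[λ_f T_c(1−u)(1+Γ) − 2u(1−2u)(1−Γ)], M_2 = Γ³·u²·[u(u−1)(3N−2) + (N−1)], M_3 = −Γ²·u²·[u(u−1)(7N−4) + (2N−1)], M_4 = Γ·u²·[N(5u²−5u+1) + 2u(1−u)], and M_5 = N·u³·(1−u). Equivalently, the Cramér–Rao bound I_m(u,N)^{−1}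 equals the reciprocal of this expression. -/
open Finset

/-!
The likelihood is that of a two-state Markov chain started in its stationary law `π = (u, 1 - u)`,
so the score `∂_u log L` is a sum of one logarithmic derivative per factor. Appending a sample
multiplies `L` by a transition probability `Pr_xy`; in the square of the score the cross term
drops out because each row `∑_y Pr_xy` is identically `1`, and the state being extended is again
distributed as `π`. Hence
`I_m(u, N) = 1/u + 1/(1 - u) + (N - 1) ∑_x π_x ∑_y (∂_u Pr_xy)² / Pr_xy`,
and the closed form is a rational identity in `u`, `λ_f T_c` and `Γ`.
-/

open Filter Topology

section MarkovPath

variable {α : Type*}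

noncomputable def pathProb (μ : α → ℝ) (P : α → α → ℝ) {n : ℕ} (z : Fin (n + 1) → α) : ℝ :=
  μ (z 0) * ∏ k : Fin n, P (z k.castSucc) (z k.succ)

noncomputable def pathScore (μ μ' : α → ℝ) (P P' : α → α → ℝ) {n : ℕ} (z : Fin (n + 1) → α) :
    ℝ :=
  μ' (z 0) / μ (z 0) + ∑ k : Fin n, P' (z k.castSucc) (z k.succ) / P (z k.castSucc) (z k.succ)

theorem pathProb_snoc (μ : α → ℝ) (P : α → α → ℝ) {n : ℕ} (z : Fin (n + 1) → α) (b : α) :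
    pathProb μ P (Fin.snoc z b : Fin (n + 2) → α) = pathProb μ P z * P (z (Fin.last n)) b := by
  simp only [pathProb, Fin.prod_univ_castSucc, Fin.snoc_apply_zero, Fin.succ_castSucc,
    Fin.snoc_castSucc, Fin.succ_last, Fin.snoc_last, mul_assoc]

theorem pathScore_snoc (μ μ' : α → ℝ) (P P' : α → α → ℝ) {n : ℕ} (z : Fin (n + 1) → α) (b : α) :
    pathScore μ μ' P P' (Fin.snoc z b : Fin (n + 2) → α) =
      pathScore μ μ' P P' z + P' (z (Fin.last n)) b / P (z (Fin.last n)) b := by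
  simp only [pathScore, Fin.sum_univ_castSucc, Fin.snoc_apply_zero, Fin.succ_castSucc,
    Fin.snoc_castSucc, Fin.succ_last, Fin.snoc_last, add_assoc]

theorem Fintype.sum_pi_fin_eq_sum_snoc [Fintype α] {M : Type*} [AddCommMonoid M] {n : ℕ}
    (F : (Fin (n + 2) → α) → M) :
    ∑ z, F z = ∑ z : Fin (n + 1) → α, ∑ b, F (Fin.snoc z b) := by
  rw [← (Fin.snocEquiv fun _ => α).sum_comp, Fintype.sum_prod_type, Finset.sum_comm]
  rfl

theorem Fintype.sum_pi_fin_one [Fintype α] {M : Type*} [AddCommMonoid M] (F : (Fin 1 → α) → M) :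
    ∑ z, F z = ∑ x, F (fun _ => x) :=
  ((Equiv.funUnique (Fin 1) α).symm.sum_comp F).symm

theorem sum_pathProb_mul_last [Fintype α] {μ : α → ℝ} {P : α → α → ℝ}
    (hstat : ∀ y, ∑ x, μ x * P x y = μ y) (n : ℕ) (f : α → ℝ) :
    ∑ z : Fin (n + 1) → α, pathProb μ P z * f (z (Fin.last n)) = ∑ x, μ x * f x := by
  induction n generalizing f with
  | zero => simp [Fintype.sum_pi_fin_one, pathProb]
  | succ n ih =>
    calc ∑ z : Fin (n + 2) → α, pathProb μ P z * f (z (Fin.last (n + 1)))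
        = ∑ z : Fin (n + 1) → α, pathProb μ P z * ∑ b, P (z (Fin.last n)) b * f b := by
          simp only [Fintype.sum_pi_fin_eq_sum_snoc, pathProb_snoc, Fin.snoc_last,
            Finset.mul_sum, mul_assoc]
      _ = ∑ x, μ x * ∑ b, P x b * f b := ih fun x => ∑ b, P x b * f b
      _ = ∑ b, (∑ x, μ x * P x b) * f b := by
          simp only [Finset.mul_sum, Finset.sum_mul, mul_assoc]
          exact Finset.sum_comm
      _ = ∑ b, μ b * f b := by simp only [hstat]

theorem sum_sq_add_div_mul [Fintype α] {p d : α → ℝ} (hp : ∀ y, p y ≠ 0)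
    (hp1 : ∑ y, p y = 1) (hd : ∑ y, d y = 0) (s : ℝ) :
    ∑ y, (s + d y / p y) ^ 2 * p y = s ^ 2 + ∑ y, d y ^ 2 / p y := by
  have expand y : (s + d y / p y) ^ 2 * p y = s ^ 2 * p y + 2 * s * d y + d y ^ 2 / p y := by
    field_simp [hp y]
    ring
  simp only [expand, Finset.sum_add_distrib, ← Finset.mul_sum, hp1, hd]
  ring

theorem sum_sq_pathScore_mul_pathProb [Fintype α] {μ μ' : α → ℝ} {P P' : α → α → ℝ}
    (hμ : ∀ x, μ x ≠ 0) (hP : ∀ x y, P x y ≠ 0) (hrow : ∀ x, ∑ y, P x y = 1)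
    (hrow' : ∀ x, ∑ y, P' x y = 0) (hstat : ∀ y, ∑ x, μ x * P x y = μ y) (n : ℕ) :
    ∑ z : Fin (n + 1) → α, pathScore μ μ' P P' z ^ 2 * pathProb μ P z =
      ∑ x, μ' x ^ 2 / μ x + n * ∑ x, μ x * ∑ y, P' x y ^ 2 / P x y := by
  induction n with
  | zero =>
    rw [Fintype.sum_pi_fin_one]
    simp only [pathScore, pathProb, Finset.univ_eq_empty, Finset.sum_empty,
      Finset.prod_empty, add_zero, mul_one, Nat.cast_zero, zero_mul]
    exact Finset.sum_congr rfl fun x _ => by field_simp [hμ x]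
  | succ n ih =>
    have step (z : Fin (n + 1) → α) :
        ∑ b, pathScore μ μ' P P' (Fin.snoc z b : Fin (n + 2) → α) ^ 2 *
            pathProb μ P (Fin.snoc z b : Fin (n + 2) → α) =
          pathScore μ μ' P P' z ^ 2 * pathProb μ P z +
            pathProb μ P z * ∑ y, P' (z (Fin.last n)) y ^ 2 / P (z (Fin.last n)) y := by
      simp only [pathScore_snoc, pathProb_snoc, mul_left_comm _ (pathProb μ P z),
        ← Finset.mul_sum, sum_sq_add_div_mul (hP _) (hrow _) (hrow' _)]
      ring
    rw [Fintype.sum_pi_fin_eq_sum_snoc, Finset.sum_congr rfl fun z _ => step z,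
      Finset.sum_add_distrib, ih,
      sum_pathProb_mul_last hstat n fun x => ∑ y, P' x y ^ 2 / P x y]
    push_cast
    ring

theorem hasDerivAt_log_pathProb {μ : ℝ → α → ℝ} {μ' : α → ℝ} {P : ℝ → α → α → ℝ}
    {P' : α → α → ℝ} {θ : ℝ} (hμ : ∀ x, HasDerivAt (μ · x) (μ' x) θ)
    (hP : ∀ x y, HasDerivAt (P · x y) (P' x y) θ) (hμ0 : ∀ x, μ θ x ≠ 0)
    (hP0 : ∀ x y, P θ x y ≠ 0) {n : ℕ} (z : Fin (n + 1) → α) :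
    HasDerivAt (fun v => Real.log (pathProb (μ v) (P v) z))
      (pathScore (μ θ) μ' (P θ) P' z) θ := by
  have hlog : (fun v => Real.log (μ v (z 0)) +
        ∑ k : Fin n, Real.log (P v (z k.castSucc) (z k.succ))) =ᶠ[𝓝 θ]
      fun v => Real.log (pathProb (μ v) (P v) z) := by
    filter_upwards [(hμ _).continuousAt.eventually_ne (hμ0 (z 0)),
      eventually_all.2 fun k : Fin n => (hP _ _).continuousAt.eventually_ne (hP0 _ _)]
      with v hμv hPv
    rw [pathProb, Real.log_mul hμv (Finset.prod_ne_zero_iff.2 fun k _ => hPv k),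
      Real.log_prod fun k _ => hPv k]
  exact (((hμ _).log (hμ0 _)).add
    (HasDerivAt.fun_sum fun k _ => (hP _ _).log (hP0 _ _))).congr_of_eventuallyEq hlog.symm

end MarkovPath

section OnOffChain

def stationaryLaw (u : ℝ) (b : Bool) : ℝ := if b then u else 1 - u

def stationaryLawDeriv (b : Bool) : ℝ := if b then 1 else -1

noncomputable def transProbDeriv (u lf t : ℝ) : Bool → Bool → ℝ
  | false, false => Real.exp (-(lf * t) / u) - 1 + lf * t / u * Real.exp (-(lf * t) / u)
  | false, true  => 1 - Real.exp (-(lf * t) / u) - lf * t / u * Real.exp (-(lf * t) / u)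
  | true,  true  =>
      1 - Real.exp (-(lf * t) / u) + (1 - u) * (lf * t / u ^ 2 * Real.exp (-(lf * t) / u))
  | true,  false =>
      Real.exp (-(lf * t) / u) - 1 - (1 - u) * (lf * t / u ^ 2 * Real.exp (-(lf * t) / u))

theorem seqProb_const_eq_pathProb (u lf Tc : ℝ) {n : ℕ} (z : Fin (n + 1) → Bool) :
    seqProb u lf (fun _ => Tc) z = pathProb (stationaryLaw u) (transProb u lf Tc) z :=
  rfl

theorem stationaryLaw_pos {u : ℝ} (hu : 0 < u) (hu1 : u < 1) (b : Bool) :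
    0 < stationaryLaw u b := by
  unfold stationaryLaw
  split <;> linarith

theorem exp_neg_div_lt_one {c u : ℝ} (hc : 0 < c) (hu : 0 < u) : Real.exp (-c / u) < 1 :=
  Real.exp_lt_one_iff.2 (div_neg_of_neg_of_pos (neg_neg_of_pos hc) hu)

theorem transProb_pos {u lf t : ℝ} (hu : 0 < u) (hu1 : u < 1) (hc : 0 < lf * t) (x y : Bool) :
    0 < transProb u lf t x y := by
  have hΓ0 := Real.exp_pos (-(lf * t) / u)
  have hΓ1 := exp_neg_div_lt_one hc hu
  cases x <;> cases y <;> simp only [transProb] <;> nlinarith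

theorem sum_transProb (u lf t : ℝ) (x : Bool) : ∑ y, transProb u lf t x y = 1 := by
  cases x <;> simp only [Fintype.sum_bool, transProb] <;> ring

theorem sum_transProbDeriv (u lf t : ℝ) (x : Bool) : ∑ y, transProbDeriv u lf t x y = 0 := by
  cases x <;> simp only [Fintype.sum_bool, transProbDeriv] <;> ring

theorem sum_stationaryLaw_mul_transProb (u lf t : ℝ) (y : Bool) :
    ∑ x, stationaryLaw u x * transProb u lf t x y = stationaryLaw u y := by
  cases y <;>
    simp only [Fintype.sum_bool, stationaryLaw, transProb, ↓reduceIte, Bool.false_eq_true] <;> ring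

theorem hasDerivAt_stationaryLaw (u : ℝ) (b : Bool) :
    HasDerivAt (stationaryLaw · b) (stationaryLawDeriv b) u := by
  cases b
  · simpa [stationaryLaw, stationaryLawDeriv] using (hasDerivAt_id u).const_sub 1
  · simpa [stationaryLaw, stationaryLawDeriv] using hasDerivAt_id' u

theorem hasDerivAt_exp_neg_div (c : ℝ) {u : ℝ} (hu : u ≠ 0) :
    HasDerivAt (fun v => Real.exp (-c / v)) (c / u ^ 2 * Real.exp (-c / u)) u := by
  have h := ((hasDerivAt_inv hu).const_mul (-c)).exp
  simp only [div_eq_mul_inv] at h ⊢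
  convert h using 1
  ring

theorem hasDerivAt_transProb (lf t : ℝ) {u : ℝ} (hu : u ≠ 0) (x y : Bool) :
    HasDerivAt (fun v => transProb v lf t x y) (transProbDeriv u lf t x y) u := by
  have hΓ := hasDerivAt_exp_neg_div (lf * t) hu
  have hidle : HasDerivAt (fun v => 1 - v + v * Real.exp (-(lf * t) / v))
      (Real.exp (-(lf * t) / u) - 1 + lf * t / u * Real.exp (-(lf * t) / u)) u := by
    refine (((hasDerivAt_id' u).const_sub 1).fun_add
      ((hasDerivAt_id' u).fun_mul hΓ)).congr_deriv ?_
    field_simp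
    ring
  have hbusy : HasDerivAt (fun v => v + (1 - v) * Real.exp (-(lf * t) / v))
      (1 - Real.exp (-(lf * t) / u) + (1 - u) * (lf * t / u ^ 2 * Real.exp (-(lf * t) / u))) u :=
    ((hasDerivAt_id' u).fun_add (((hasDerivAt_id' u).const_sub 1).fun_mul hΓ)).congr_deriv
      (by ring)
  cases x <;> cases y <;> simp only [transProb, transProbDeriv]
  · exact hidle
  · exact (hidle.const_sub 1).congr_deriv (by ring)
  · exact (hbusy.const_sub 1).congr_deriv (by ring)
  · exact hbusy

theorem sum_sq_deriv_log_seqProb_mul_seqProb {u lf Tc : ℝ} (hu : 0 < u) (hu1 : u < 1)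
    (hc : 0 < lf * Tc) (n : ℕ) :
    ∑ z : Fin (n + 1) → Bool,
        deriv (fun v => Real.log (seqProb v lf (fun _ => Tc) z)) u ^ 2 *
          seqProb u lf (fun _ => Tc) z =
      ∑ x, stationaryLawDeriv x ^ 2 / stationaryLaw u x +
        n * ∑ x, stationaryLaw u x *
          ∑ y, transProbDeriv u lf Tc x y ^ 2 / transProb u lf Tc x y := by
  have hμ0 x : stationaryLaw u x ≠ 0 := (stationaryLaw_pos hu hu1 x).ne'
  have hP0 x y : transProb u lf Tc x y ≠ 0 := (transProb_pos hu hu1 hc x y).ne'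
  have hscore (z : Fin (n + 1) → Bool) :
      deriv (fun v => Real.log (seqProb v lf (fun _ => Tc) z)) u =
        pathScore (stationaryLaw u) stationaryLawDeriv (transProb u lf Tc)
          (transProbDeriv u lf Tc) z :=
    (hasDerivAt_log_pathProb (hasDerivAt_stationaryLaw u)
      (hasDerivAt_transProb lf Tc hu.ne') hμ0 hP0 z).deriv
  simp_rw [hscore, seqProb_const_eq_pathProb]
  exact sum_sq_pathScore_mul_pathProb hμ0 hP0 (sum_transProb u lf Tc)
    (sum_transProbDeriv u lf Tc) (sum_stationaryLaw_mul_transProb u lf Tc) n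

end OnOffChain

theorem fisher_information_u_general (u lf Tc : ℝ)
    (hu : 0 < u) (hu1 : u < 1) (hlf : 0 < lf) (hTc : 0 < Tc)
    (n : ℕ) :
    let Γ : ℝ := Real.exp (-(lf * Tc) / u)
    let Nr : ℝ := (n : ℝ) + 1
    let M1 : ℝ := Γ ^ 2 * (lf * Tc) * (Nr - 1) * (1 - u) *
      (lf * Tc * (1 - u) * (1 + Γ) - 2 * u * (1 - 2 * u) * (1 - Γ))
    let M2 : ℝ := Γ ^ 3 * u ^ 2 * (u * (u - 1) * (3 * Nr - 2) + (Nr - 1))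
    let M3 : ℝ := -(Γ ^ 2 * u ^ 2 * (u * (u - 1) * (7 * Nr - 4) + (2 * Nr - 1)))
    let M4 : ℝ := Γ * u ^ 2 * (Nr * (5 * u ^ 2 - 5 * u + 1) + 2 * u * (1 - u))
    let M5 : ℝ := Nr * u ^ 3 * (1 - u)
    ∑ z : Fin (n + 1) → Bool,
        (deriv (fun v => Real.log (seqProb v lf (fun _ => Tc) z)) u) ^ 2
          * seqProb u lf (fun _ => Tc) z
      = (M1 + M2 + M3 + M4 + M5) /
          (u ^ 3 * (1 - u) * (1 - Γ) * (Γ + u - Γ * u) * (Γ * u - u + 1)) := by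
  intro Γ Nr M1 M2 M3 M4 M5
  have hc : 0 < lf * Tc := mul_pos hlf hTc
  rw [sum_sq_deriv_log_seqProb_mul_seqProb hu hu1 hc n]
  obtain ⟨hΓ0, hΓ1⟩ := And.intro (Real.exp_pos (-(lf * Tc) / u)) (exp_neg_div_lt_one hc hu)
  simp only [Γ, Nr, M1, M2, M3, M4, M5, Fintype.sum_bool, stationaryLaw, stationaryLawDeriv,
    transProb, transProbDeriv, ↓reduceIte, Bool.false_eq_true]
  generalize Real.exp (-(lf * Tc) / u) = g at hΓ0 hΓ1 ⊢
  generalize lf * Tc = c at hc ⊢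
  have h1u : 1 - u ≠ 0 := by linarith
  have hg : 1 - g ≠ 0 := by linarith
  have h11 : u + (1 - u) * g ≠ 0 := by nlinarith
  have h00 : 1 - u + u * g ≠ 0 := by nlinarith
  have h10 : 1 - (u + (1 - u) * g) ≠ 0 := by nlinarith
  have h01 : 1 - (1 - u + u * g) ≠ 0 := by nlinarith
  have hden₁ : g + u - u * g ≠ 0 := by nlinarith
  have hden₂ : u * (g - 1) + 1 ≠ 0 := by nlinarith
  field_simp
  ring

/-- closed form of the Fisher information
`I_m(u,N) = ∑_z (∂/∂u log L(z;u))² L(z;u)` for estimating the duty cycle `u`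
under uniform sampling with inter-sample time `T_c`, `λ_f` held fixed and
`N = n + 1 ≥ 2` samples. -/
theorem fisher_information_u (u lf Tc : ℝ)
    (hu : 0 < u) (hu1 : u < 1) (hlf : 0 < lf) (hTc : 0 < Tc)
    (n : ℕ) (hn : 1 ≤ n) :
    let Γ : ℝ := Real.exp (-(lf * Tc) / u)
    let Nr : ℝ := (n : ℝ) + 1
    let M1 : ℝ := Γ ^ 2 * (lf * Tc) * (Nr - 1) * (1 - u) *
      (lf * Tc * (1 - u) * (1 + Γ) - 2 * u * (1 - 2 * u) * (1 - Γ))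
    let M2 : ℝ := Γ ^ 3 * u ^ 2 * (u * (u - 1) * (3 * Nr - 2) + (Nr - 1))
    let M3 : ℝ := -(Γ ^ 2 * u ^ 2 * (u * (u - 1) * (7 * Nr - 4) + (2 * Nr - 1)))
    let M4 : ℝ := Γ * u ^ 2 * (Nr * (5 * u ^ 2 - 5 * u + 1) + 2 * u * (1 - u))
    let M5 : ℝ := Nr * u ^ 3 * (1 - u)
    ∑ z : Fin (n + 1) → Bool,
        (deriv (fun v => Real.log (seqProb v lf (fun _ => Tc) z)) u) ^ 2
          * seqProb u lf (fun _ => Tc) z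
      = (M1 + M2 + M3 + M4 + M5) /
          (u ^ 3 * (1 - u) * (1 - Γ) * (Γ + u - Γ * u) * (Γ * u - u + 1)) :=
  fisher_information_u_general u lf Tc hu hu1 hlf hTc n
end
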